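/- arXiv:2601.17855 — 2 statements merged into one kernel-verified Lean document; each statement's English description precedes it below -/
import Mathlib

section
/- Let G ≥ 1 and B ≥ 1 be integers, let s_max > 0 be a real number, and let s_1, …, s_{GB} be real numbers in the interval [0, s_max]. Consider partitions of the multiset {s_1, …, s_{GB}} into G groups S_1, …, S_G, each of cardinality B, with group loads L_g = ∑_{s ∈ S_g} s, maximum load M = max_g L_g and minimum load m = min_g L_g. Then any partition that minimizes, in lexicographic order, the pair (M, number of indices g with L_g = M) over all such partitions satisfies M − m ≤ s_max. -/
open Finset

/-- `f` partitions the `G*B` items into `G` groups, each of cardinality `B`. -/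
def IsBPartition (G B : ℕ) (f : Fin (G * B) → Fin G) : Prop :=
  ∀ g : Fin G, (Finset.univ.filter fun i => f i = g).card = B

/-- The load of group `g`: the sum of the values assigned to it. -/
noncomputable def groupLoad (G B : ℕ) (s : Fin (G * B) → ℝ)
    (f : Fin (G * B) → Fin G) (g : Fin G) : ℝ :=
  ∑ i ∈ Finset.univ.filter (fun i => f i = g), s i

/-- The maximum group load. -/
noncomputable def maxLoad (G B : ℕ) [NeZero G] (s : Fin (G * B) → ℝ)
    (f : Fin (G * B) → Fin G) : ℝ :=
  Finset.univ.sup' ⟨0, Finset.mem_univ 0⟩ (groupLoad G B s f)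

/-- The minimum group load. -/
noncomputable def minLoad (G B : ℕ) [NeZero G] (s : Fin (G * B) → ℝ)
    (f : Fin (G * B) → Fin G) : ℝ :=
  Finset.univ.inf' ⟨0, Finset.mem_univ 0⟩ (groupLoad G B s f)

open scoped Classical in
/-- The number of groups attaining the maximum load. -/
noncomputable def numMax (G B : ℕ) [NeZero G] (s : Fin (G * B) → ℝ)
    (f : Fin (G * B) → Fin G) : ℕ :=
  (Finset.univ.filter fun g => groupLoad G B s f g = maxLoad G B s f).card

/-- Any partition of the `G*B` values into `G` groups of size `B` that minimizes,
in lexicographic order, the pair (maximum load, number of groups attaining the maximum)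
satisfies `M − m ≤ s_max`. -/
theorem lexmin_partition_gap_le (G B : ℕ) [NeZero G] (hB : 1 ≤ B)
    (smax : ℝ) (hsmax : 0 < smax)
    (s : Fin (G * B) → ℝ) (hs : ∀ i, s i ∈ Set.Icc (0 : ℝ) smax)
    (f : Fin (G * B) → Fin G) (hf : IsBPartition G B f)
    (hlexmin : ∀ f' : Fin (G * B) → Fin G, IsBPartition G B f' →
      maxLoad G B s f < maxLoad G B s f' ∨
        (maxLoad G B s f = maxLoad G B s f' ∧ numMax G B s f ≤ numMax G B s f')) :
    maxLoad G B s f - minLoad G B s f ≤ smax := by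
  classical
  by_contra hgap
  push_neg at hgap
  set M := maxLoad G B s f with hM
  set m := minLoad G B s f with hm
  have hmM : m + smax < M := by linarith
  have hne : (Finset.univ : Finset (Fin G)).Nonempty := ⟨0, Finset.mem_univ 0⟩
  obtain ⟨gM, -, hgM⟩ := Finset.exists_mem_eq_sup' hne (groupLoad G B s f)
  obtain ⟨gm, -, hgm⟩ := Finset.exists_mem_eq_inf' hne (groupLoad G B s f)
  replace hgM : M = groupLoad G B s f gM := hgM
  replace hgm : m = groupLoad G B s f gm := hgm
  set A := Finset.univ.filter (fun i => f i = gM) with hA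
  set C := Finset.univ.filter (fun i => f i = gm) with hC
  have hAcard : A.card = B := hf gM
  have hCcard : C.card = B := hf gm
  have hAne : A.Nonempty := Finset.card_pos.mp (by omega)
  have hCne : C.Nonempty := Finset.card_pos.mp (by omega)
  obtain ⟨i, hiA, hiMax⟩ := Finset.exists_max_image A s hAne
  obtain ⟨j, hjC, hjMin⟩ := C.exists_min_image s hCne
  have hfi : f i = gM := (Finset.mem_filter.mp hiA).2
  have hfj : f j = gm := (Finset.mem_filter.mp hjC).2
  have hmltM : m < M := by
    have := (hs i).2
    linarith [(hs i).1]
  -- B * s i ≥ M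
  have hBi : M ≤ (B : ℝ) * s i := by
    have := Finset.sum_le_card_nsmul A s (s i) (fun x hx => hiMax x hx)
    rw [hgM]
    simpa [groupLoad, ← hA, hAcard, nsmul_eq_mul] using this
  have hBj : (B : ℝ) * s j ≤ m := by
    have := Finset.card_nsmul_le_sum C s (s j) (fun x hx => hjMin x hx)
    rw [hgm]
    simpa [groupLoad, ← hC, hCcard, nsmul_eq_mul] using this
  have hji : s j < s i := by
    have hBpos : (0:ℝ) < (B:ℝ) := by exact_mod_cast hB
    nlinarith
  have hgMgm : gM ≠ gm := by
    intro h
    have : M = m := by rw [hgM, h, ← hgm]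
    linarith
  have hij : i ≠ j := fun h => hgMgm (by rw [← hfi, h, hfj])
  have hjA : j ∉ A := by
    simp only [hA, Finset.mem_filter, hfj]
    exact fun h => hgMgm h.2.symm
  have hiC : i ∉ C := by
    simp only [hC, Finset.mem_filter, hfi]
    exact fun h => hgMgm h.2
  -- the swapped assignment
  set σ := Equiv.swap i j with hσ
  set f' := f ∘ σ with hf'
  have hfilter : ∀ g : Fin G, Finset.univ.filter (fun x => f' x = g)
      = (Finset.univ.filter (fun x => f x = g)).map σ.toEmbedding := by
    intro g
    ext x
    simp only [Finset.mem_filter, Finset.mem_map, Finset.mem_univ, true_and, hf',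
      Function.comp_apply, Equiv.coe_toEmbedding]
    constructor
    · intro h
      exact ⟨σ x, h, by simp [hσ, Equiv.swap_apply_self]⟩
    · rintro ⟨y, hy, rfl⟩
      simpa [hσ, Equiv.swap_apply_self] using hy
  have hf'part : IsBPartition G B f' := by
    intro g
    rw [hfilter g, Finset.card_map]
    exact hf g
  -- loads of unchanged groups
  have hload_other : ∀ g : Fin G, g ≠ gM → g ≠ gm →
      groupLoad G B s f' g = groupLoad G B s f g := by
    intro g hg1 hg2
    unfold groupLoad
    rw [hfilter g, Finset.sum_map]
    apply Finset.sum_congr rfl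
    intro x hx
    have hfx : f x = g := (Finset.mem_filter.mp hx).2
    have hxi : x ≠ i := fun h => hg1 (by rw [← hfx, h, hfi])
    have hxj : x ≠ j := fun h => hg2 (by rw [← hfx, h, hfj])
    simp [hσ, Equiv.swap_apply_of_ne_of_ne hxi hxj]
  have hsum_swap : ∀ (T : Finset (Fin (G*B))) (a b : Fin (G*B)), a ∈ T → b ∉ T →
      ∑ x ∈ T, s (σ x) = ∑ x ∈ T, s x - s a + s b → True := fun _ _ _ _ _ _ => trivial
  have hloadM : groupLoad G B s f' gM = groupLoad G B s f gM - s i + s j := by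
    unfold groupLoad
    rw [hfilter gM, Finset.sum_map]
    simp only [Equiv.coe_toEmbedding]
    have e1 : ∑ x ∈ Finset.univ.filter (fun x => f x = gM), s (σ x)
        = ∑ x ∈ (Finset.univ.filter (fun x => f x = gM)).erase i, s (σ x) + s (σ i) :=
      (Finset.sum_erase_add _ _ hiA).symm
    have e2 : ∑ x ∈ Finset.univ.filter (fun x => f x = gM), s x
        = ∑ x ∈ (Finset.univ.filter (fun x => f x = gM)).erase i, s x + s i :=
      (Finset.sum_erase_add _ _ hiA).symm
    rw [e1, e2]
    have h1 : σ i = j := Equiv.swap_apply_left i j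
    have h2 : ∀ x ∈ (Finset.univ.filter (fun x => f x = gM)).erase i, s (σ x) = s x := by
      intro x hx
      have hxi : x ≠ i := (Finset.mem_erase.mp hx).1
      have hxj : x ≠ j := fun h => hjA (h ▸ (Finset.mem_erase.mp hx).2)
      simp [hσ, Equiv.swap_apply_of_ne_of_ne hxi hxj]
    rw [h1, Finset.sum_congr rfl h2]
    ring
  have hloadm : groupLoad G B s f' gm = groupLoad G B s f gm + s i - s j := by
    unfold groupLoad
    rw [hfilter gm, Finset.sum_map]
    simp only [Equiv.coe_toEmbedding]
    have e1 : ∑ x ∈ Finset.univ.filter (fun x => f x = gm), s (σ x)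
        = ∑ x ∈ (Finset.univ.filter (fun x => f x = gm)).erase j, s (σ x) + s (σ j) :=
      (Finset.sum_erase_add _ _ hjC).symm
    have e2 : ∑ x ∈ Finset.univ.filter (fun x => f x = gm), s x
        = ∑ x ∈ (Finset.univ.filter (fun x => f x = gm)).erase j, s x + s j :=
      (Finset.sum_erase_add _ _ hjC).symm
    rw [e1, e2]
    have h1 : σ j = i := Equiv.swap_apply_right i j
    have h2 : ∀ x ∈ (Finset.univ.filter (fun x => f x = gm)).erase j, s (σ x) = s x := by
      intro x hx
      have hxj : x ≠ j := (Finset.mem_erase.mp hx).1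
      have hxi : x ≠ i := fun h => hiC (h ▸ (Finset.mem_erase.mp hx).2)
      simp [hσ, Equiv.swap_apply_of_ne_of_ne hxi hxj]
    rw [h1, Finset.sum_congr rfl h2]
    ring
  -- All new loads ≤ M, with strict inequality for gM and gm
  have hload_le : ∀ g : Fin G, groupLoad G B s f' g ≤ M := by
    intro g
    by_cases h1 : g = gM
    · rw [h1, hloadM, ← hgM]; linarith
    · by_cases h2 : g = gm
      · rw [h2, hloadm, ← hgm]
        have h3 : s i ≤ smax := (hs i).2
        have h4 : 0 ≤ s j := (hs j).1
        linarith
      · rw [hload_other g h1 h2]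
        exact Finset.le_sup' (groupLoad G B s f) (Finset.mem_univ g)
  have hloadM_lt : groupLoad G B s f' gM < M := by
    rw [hloadM, ← hgM]; linarith
  have hloadm_lt : groupLoad G B s f' gm < M := by
    rw [hloadm, ← hgm]
    have h3 : s i ≤ smax := (hs i).2
    have h4 : 0 ≤ s j := (hs j).1
    linarith
  have hmax' : maxLoad G B s f' ≤ M := Finset.sup'_le _ _ (fun g _ => hload_le g)
  rcases hlexmin f' hf'part with h | ⟨heq, hle⟩
  · linarith
  · -- numMax f' < numMax f
    have hsub : (Finset.univ.filter fun g => groupLoad G B s f' g = maxLoad G B s f')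
        ⊂ (Finset.univ.filter fun g => groupLoad G B s f g = M) := by
      rw [← heq]
      constructor
      · intro g hg
        have hgload : groupLoad G B s f' g = M := (Finset.mem_filter.mp hg).2
        have h1 : g ≠ gM := fun h => by rw [h] at hgload; linarith
        have h2 : g ≠ gm := fun h => by rw [h] at hgload; linarith
        rw [Finset.mem_filter]
        exact ⟨Finset.mem_univ g, by rw [← hload_other g h1 h2]; exact hgload⟩
      · intro hsub'
        have : gM ∈ Finset.univ.filter fun g => groupLoad G B s f' g = M :=
          hsub' (Finset.mem_filter.mpr ⟨Finset.mem_univ gM, hgM.symm⟩)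
        have := (Finset.mem_filter.mp this).2
        linarith
    have := Finset.card_lt_card hsub
    have hnum : numMax G B s f' < numMax G B s f := by
      unfold numMax
      convert this using 2
    omega
end

section
/- Let G ≥ 1 and B ≥ 1 be integers, let s_max > 0 be a real number, and let s_1, …, s_{GB} be real numbers in the interval [0, s_max]. Then there exists a partition of {s_1, …, s_{GB}} into G groups S_1, …, S_G of cardinality B each, which minimizes the maximum group load M = max_g ∑_{s ∈ S_g} s over all such partitions and which in addition satisfies ∑_{g=1}^{G} (M − L_g) ≤ (G − 1) s_max, where L_g = ∑_{s ∈ S_g} s. In particular, the minimum over all such partitions of the imbalance ∑_{g=1}^{G} (max_h L_h − L_g) is at most (G − 1) s_max. -/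
/-!
Among the partitions minimizing the maximum load `M`, take one that also minimizes the sum of
squared loads. If some group `g` had load below `M - smax`, a group `h` of load `M` holds an item
larger than some item of `g` (both groups have `B` items), and swapping the two moves
`d ∈ (0, smax]` from `h` to `g`: no load exceeds `M`, yet the sum of squares drops by
`2d (M - L_g - d) > 0`. Hence every group is within `smax` of `M`, and the group attaining `M`
contributes nothing to the imbalance.
-/

open Finset

theorem Finset.exists_lt_of_card_eq_of_sum_lt {ι M : Type*} [AddCommMonoid M] [LinearOrder M]
    [IsOrderedCancelAddMonoid M] {T T' : Finset ι} {s : ι → M} (hcard : T.card = T'.card)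
    (hsum : ∑ j ∈ T, s j < ∑ i ∈ T', s i) : ∃ i ∈ T', ∃ j ∈ T, s j < s i := by
  by_contra! hle
  have hsmul : T.card • ∑ i ∈ T', s i ≤ T'.card • ∑ j ∈ T, s j :=
    calc T.card • ∑ i ∈ T', s i = ∑ i ∈ T', ∑ _j ∈ T, s i := by simp [smul_sum]
      _ ≤ ∑ i ∈ T', ∑ j ∈ T, s j := sum_le_sum fun i hi => sum_le_sum (hle i hi)
      _ = T'.card • ∑ j ∈ T, s j := by rw [sum_const]
  rcases Nat.eq_zero_or_pos T.card with hT | hT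
  · have hT' : T'.card = 0 := hcard ▸ hT
    rw [card_eq_zero.1 hT, card_eq_zero.1 hT'] at hsum
    exact lt_irrefl _ hsum
  · rw [← hcard, nsmul_le_nsmul_iff_right hT.ne'] at hsmul
    exact hsmul.not_gt hsum

theorem Finset.exists_lex_min_image {α β γ : Type*} [LinearOrder β] [LinearOrder γ]
    (S : Finset α) (hS : S.Nonempty) (u : α → β) (v : α → γ) :
    ∃ a ∈ S, (∀ b ∈ S, u a ≤ u b) ∧ ∀ b ∈ S, u b ≤ u a → v a ≤ v b := by
  classical
  obtain ⟨a₀, ha₀, hmin⟩ := S.exists_min_image u hS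
  obtain ⟨a, ha, hvmin⟩ := (S.filter fun b => u b ≤ u a₀).exists_min_image v
    ⟨a₀, mem_filter.2 ⟨ha₀, le_rfl⟩⟩
  obtain ⟨haS, hua⟩ := mem_filter.1 ha
  exact ⟨a, haS, fun b hb => hua.trans (hmin b hb),
    fun b hb hba => hvmin b (mem_filter.2 ⟨hb, hba.trans hua⟩)⟩

theorem Fintype.sum_sq_add_single_sub_single_lt {ι : Type*} [Fintype ι] [DecidableEq ι]
    (L : ι → ℝ) {a b : ι} (hab : a ≠ b) {d : ℝ} (hd : 0 < d) (hlt : L a + d < L b) :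
    ∑ x, (L + Pi.single a d - Pi.single b d : ι → ℝ) x ^ 2 < ∑ x, L x ^ 2 := by
  have hdiff : ∑ x, ((L + Pi.single a d - Pi.single b d : ι → ℝ) x ^ 2 - L x ^ 2)
      = ((L a + d) ^ 2 - L a ^ 2) + ((L b - d) ^ 2 - L b ^ 2) := by
    rw [Fintype.sum_eq_add a b hab fun x hx => by simp [hx.1, hx.2]]
    simp [hab, hab.symm]
  rw [sum_sub_distrib] at hdiff
  nlinarith

section Partitions

variable {G B : ℕ}

theorem isBPartition_finProdFinEquiv_symm_fst :
    IsBPartition G B fun i => (finProdFinEquiv.symm i).1 := by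
  intro g
  calc (univ.filter fun i : Fin (G * B) => (finProdFinEquiv.symm i).1 = g).card
      = (univ.filter fun p : Fin G × Fin B => p.1 = g).card :=
        card_equiv finProdFinEquiv.symm fun i => by simp
    _ = B := by
        rw [show (univ.filter fun p : Fin G × Fin B => p.1 = g) = {g} ×ˢ univ by
          ext ⟨x, y⟩; simp [eq_comm]]
        simp

theorem IsBPartition.comp_perm {f : Fin (G * B) → Fin G} (hf : IsBPartition G B f)
    (σ : Equiv.Perm (Fin (G * B))) : IsBPartition G B (f ∘ σ) :=
  fun g => (card_equiv σ fun i => by simp).trans (hf g)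

variable (s : Fin (G * B) → ℝ) (f : Fin (G * B) → Fin G)

theorem groupLoad_add (t : Fin (G * B) → ℝ) :
    groupLoad G B (s + t) f = groupLoad G B s f + groupLoad G B t f := by
  ext g
  exact sum_add_distrib

theorem groupLoad_sub (t : Fin (G * B) → ℝ) :
    groupLoad G B (s - t) f = groupLoad G B s f - groupLoad G B t f := by
  ext g
  exact sum_sub_distrib ..

theorem groupLoad_single (i : Fin (G * B)) (c : ℝ) :
    groupLoad G B (Pi.single i c) f = Pi.single (f i) c := by
  ext g
  simp [groupLoad, Pi.single_apply, eq_comm]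

theorem groupLoad_comp_perm (σ : Equiv.Perm (Fin (G * B))) :
    groupLoad G B s (f ∘ σ) = groupLoad G B (s ∘ σ.symm) f := by
  ext g
  exact sum_equiv σ (fun i => by simp) fun i _ => by simp

theorem comp_swap_eq_add_single_sub_single (i j : Fin (G * B)) :
    s ∘ Equiv.swap i j = s + Pi.single j (s i - s j) - Pi.single i (s i - s j) := by
  ext k
  rcases eq_or_ne k i with rfl | hki
  · rcases eq_or_ne k j with rfl | hkj <;> simp [*]
  · rcases eq_or_ne k j with rfl | hkj
    · simp [hki]
    · simp [Equiv.swap_apply_of_ne_of_ne hki hkj, hki, hkj]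

theorem groupLoad_comp_swap (i j : Fin (G * B)) :
    groupLoad G B s (f ∘ Equiv.swap i j) = groupLoad G B s f
      + Pi.single (f j) (s i - s j) - Pi.single (f i) (s i - s j) := by
  rw [groupLoad_comp_perm, Equiv.symm_swap, comp_swap_eq_add_single_sub_single, groupLoad_sub,
    groupLoad_add, groupLoad_single, groupLoad_single]

noncomputable def sumSqLoad : ℝ := ∑ g, groupLoad G B s f g ^ 2

variable [NeZero G]

theorem groupLoad_le_maxLoad (g : Fin G) : groupLoad G B s f g ≤ maxLoad G B s f :=
  le_sup' _ (mem_univ g)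

theorem exists_groupLoad_eq_maxLoad : ∃ h, groupLoad G B s f h = maxLoad G B s f := by
  obtain ⟨h, -, hh⟩ := exists_mem_eq_sup' univ_nonempty (groupLoad G B s f)
  exact ⟨h, hh.symm⟩

theorem maxLoad_le_iff {M : ℝ} : maxLoad G B s f ≤ M ↔ ∀ g, groupLoad G B s f g ≤ M :=
  ⟨fun h g => (groupLoad_le_maxLoad s f g).trans h, fun h => sup'_le _ _ fun g _ => h g⟩

theorem exists_isBPartition_lex_min :
    ∃ f, IsBPartition G B f ∧
      (∀ f', IsBPartition G B f' → maxLoad G B s f ≤ maxLoad G B s f') ∧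
      ∀ f', IsBPartition G B f' → maxLoad G B s f' ≤ maxLoad G B s f →
        sumSqLoad s f ≤ sumSqLoad s f' := by
  classical
  obtain ⟨f, hf, hmin⟩ := (univ.filter (IsBPartition G B)).exists_lex_min_image
    ⟨_, mem_filter.2 ⟨mem_univ _, isBPartition_finProdFinEquiv_symm_fst⟩⟩
    (maxLoad G B s) (sumSqLoad s)
  simp only [mem_filter, mem_univ, true_and] at hf hmin
  exact ⟨f, hf, hmin⟩

variable {s f}

theorem exists_swap_sumSqLoad_lt {smax : ℝ} (hsmax : 0 ≤ smax)
    (hs : ∀ i, s i ∈ Set.Icc (0 : ℝ) smax) (hf : IsBPartition G B f) {g : Fin G}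
    (hg : groupLoad G B s f g + smax < maxLoad G B s f) :
    ∃ f', IsBPartition G B f' ∧ maxLoad G B s f' ≤ maxLoad G B s f ∧
      sumSqLoad s f' < sumSqLoad s f := by
  obtain ⟨h, hh⟩ := exists_groupLoad_eq_maxLoad s f
  obtain ⟨i, hi, j, hj, hji⟩ := exists_lt_of_card_eq_of_sum_lt ((hf g).trans (hf h).symm)
    (show groupLoad G B s f g < groupLoad G B s f h by linarith)
  rw [mem_filter] at hi hj
  have hd : s i - s j ≤ smax := by linarith [(hs i).2, (hs j).1]
  have hgh : g ≠ h := by rintro rfl; linarith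
  refine ⟨f ∘ Equiv.swap i j, hf.comp_perm _, ?_, ?_⟩
  · rw [maxLoad_le_iff, groupLoad_comp_swap, hi.2, hj.2]
    intro x
    rcases eq_or_ne x g with rfl | hxg
    · simp only [Pi.add_apply, Pi.sub_apply, Pi.single_eq_same, Pi.single_eq_of_ne hgh]
      linarith
    · rcases eq_or_ne x h with rfl | hxh
      · simp only [Pi.add_apply, Pi.sub_apply, Pi.single_eq_same, Pi.single_eq_of_ne hxg]
        linarith
      · simpa [hxg, hxh] using groupLoad_le_maxLoad s f x
  · rw [sumSqLoad, sumSqLoad, groupLoad_comp_swap, hi.2, hj.2]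
    exact Fintype.sum_sq_add_single_sub_single_lt _ hgh (sub_pos.2 hji) (by linarith)

theorem maxLoad_sub_groupLoad_le_of_sumSqLoad_min {smax : ℝ} (hsmax : 0 ≤ smax)
    (hs : ∀ i, s i ∈ Set.Icc (0 : ℝ) smax) (hf : IsBPartition G B f)
    (hsq : ∀ f', IsBPartition G B f' → maxLoad G B s f' ≤ maxLoad G B s f →
      sumSqLoad s f ≤ sumSqLoad s f') (g : Fin G) :
    maxLoad G B s f - groupLoad G B s f g ≤ smax := by
  by_contra! hg
  obtain ⟨f', hf', hmax, hlt⟩ := exists_swap_sumSqLoad_lt hsmax hs hf (g := g) (by linarith)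
  exact (hsq f' hf' hmax).not_gt hlt

theorem sum_maxLoad_sub_groupLoad_le {c : ℝ}
    (hc : ∀ g, maxLoad G B s f - groupLoad G B s f g ≤ c) :
    ∑ g, (maxLoad G B s f - groupLoad G B s f g) ≤ ((G : ℝ) - 1) * c := by
  obtain ⟨h, hh⟩ := exists_groupLoad_eq_maxLoad s f
  rw [← add_sum_erase _ _ (mem_univ h), hh, sub_self, zero_add]
  calc ∑ g ∈ univ.erase h, (maxLoad G B s f - groupLoad G B s f g)
      ≤ (univ.erase h).card • c := sum_le_card_nsmul _ _ _ fun g _ => hc g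
    _ = ((G : ℝ) - 1) * c := by
      rw [card_erase_of_mem (mem_univ h), card_univ, Fintype.card_fin, nsmul_eq_mul,
        Nat.cast_pred (NeZero.pos G)]

end Partitions

theorem exists_minimizing_partition_imbalance_le_general (G B : ℕ) [NeZero G]
    (smax : ℝ) (hsmax : 0 < smax)
    (s : Fin (G * B) → ℝ) (hs : ∀ i, s i ∈ Set.Icc (0 : ℝ) smax) :
    ∃ f : Fin (G * B) → Fin G, IsBPartition G B f ∧
      (∀ f' : Fin (G * B) → Fin G, IsBPartition G B f' →
        maxLoad G B s f ≤ maxLoad G B s f') ∧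
      ∑ g : Fin G, (maxLoad G B s f - groupLoad G B s f g) ≤ ((G : ℝ) - 1) * smax := by
  obtain ⟨f, hf, hmin, hsq⟩ := exists_isBPartition_lex_min s
  exact ⟨f, hf, hmin, sum_maxLoad_sub_groupLoad_le
    (maxLoad_sub_groupLoad_le_of_sumSqLoad_min hsmax.le hs hf hsq)⟩

/-- There exists a partition into `G` groups of size `B` that minimizes the maximum
group load over all such partitions and whose imbalance `∑ g (M − L_g)` is at most
`(G − 1) · s_max`. -/
theorem exists_minimizing_partition_imbalance_le (G B : ℕ) [NeZero G] (hB : 1 ≤ B)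
    (smax : ℝ) (hsmax : 0 < smax)
    (s : Fin (G * B) → ℝ) (hs : ∀ i, s i ∈ Set.Icc (0 : ℝ) smax) :
    ∃ f : Fin (G * B) → Fin G, IsBPartition G B f ∧
      (∀ f' : Fin (G * B) → Fin G, IsBPartition G B f' →
        maxLoad G B s f ≤ maxLoad G B s f') ∧
      ∑ g : Fin G, (maxLoad G B s f - groupLoad G B s f g) ≤ ((G : ℝ) - 1) * smax :=
  exists_minimizing_partition_imbalance_le_general G B smax hsmax s hs
end
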